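/- Let V ∈ ℂ^{M×M} be Hermitian and let q̂ ∈ ℝ³. For each pair p = (m,r) with 1 ≤ m < r ≤ M set Δ_p = d_m − d_r, u_p = |V_{mr}|, ψ_p = arg(V_{mr}); choose an integer z_p minimizing |ψ_p + π − ω Δ_pᵀ q̂ + 2πz| over z ∈ ℤ, and set ψ̂_p = ψ_p + π + 2π z_p and û_p = (u_p / M)·sinc(ψ̂_p − ω Δ_pᵀ q̂). Then there exists a constant c ∈ ℝ (independent of q) such that for all q ∈ ℝ³, a(q)^H V a(q) ≤ Σ_{p} û_p·(ψ̂_p − ω Δ_pᵀ q)² + c, with equality when q = q̂. -/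

import Mathlib

open Matrix Real

/-- The unnormalized sinc function: `sinc x = sin x / x` for `x ≠ 0` and `sinc 0 = 1`. -/
noncomputable def sinc (x : ℝ) : ℝ := if x = 0 then 1 else Real.sin x / x

/-- The steering vector `a(q) = M^{-1/2} (exp(i ω d_1ᵀ q), …, exp(i ω d_Mᵀ q))`. -/
noncomputable def steer (M : ℕ) (d : Fin M → Fin 3 → ℝ) (ω : ℝ) (q : Fin 3 → ℝ) :
    Fin M → ℂ :=
  fun m => ((Real.sqrt M : ℝ) : ℂ)⁻¹ * Complex.exp (Complex.I * ((ω * (d m ⬝ᵥ q) : ℝ) : ℂ))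

/-- The set of distinct pairs `{(m,r) : m < r}`. -/
def pairs (M : ℕ) : Finset (Fin M × Fin M) := Finset.univ.filter fun p => p.1 < p.2

/-!
Writing `a_m(q)^* a_r(q) = M⁻¹ exp(-i ω Δ_{mr}ᵀ q)` and pairing `(m, r)` with `(r, m)`,
`Re a(q)ᴴ V a(q)` is a `q`-independent diagonal part plus
`2 Σ_{m<r} (|V_{mr}|/M) cos(ψ_p - ω Δ_pᵀ q) = -2 Σ_{m<r} (|V_{mr}|/M) cos(ψ̂_p - ω Δ_pᵀ q)`,
and the choice of `z_p` gives `|ψ̂_p - ω Δ_pᵀ q̂| ≤ π`. It therefore suffices that for `|a| ≤ π`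
the even function `x ↦ cos x + sinc a · x² / 2` is minimal at `x = a`. Its derivative
`sinc a · x - sin x = x (sinc a - sinc x)` is `≤ 0` on `[0, a]` and `≥ 0` on `[a, π]` since
`sinc = slope sin 0` decreases on `[0, π]` by concavity of `sin`; for `x ≥ π`, use `cos x ≥ cos π`.
-/

open Set

lemma abs_le_of_abs_le_abs_add_two_mul {y c : ℝ} (hc : 0 < c) (h₁ : |y| ≤ |y + 2 * c|)
    (h₂ : |y| ≤ |y - 2 * c|) : |y| ≤ c := by
  rw [← sq_le_sq] at h₁ h₂
  exact abs_le.2 ⟨by nlinarith, by nlinarith⟩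

namespace Real

lemma sinc_mul_self (x : ℝ) : Real.sinc x * x = sin x := by
  rcases eq_or_ne x 0 with rfl | hx
  · simp
  · rw [sinc_of_ne_zero hx, div_mul_cancel₀ _ hx]

lemma sinc_abs (x : ℝ) : Real.sinc |x| = Real.sinc x := by
  rcases abs_choice x with h | h <;> rw [h]
  exact sinc_neg x

lemma sinc_pi : Real.sinc π = 0 := by
  rw [sinc_of_ne_zero pi_ne_zero, sin_pi, zero_div]

lemma sinc_antitoneOn : AntitoneOn Real.sinc (Icc 0 π) := by
  intro x hx y hy hxy
  rcases eq_or_lt_of_le hx.1 with rfl | hx0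
  · simpa using sinc_le_one y
  have hy0 : y ≠ 0 := (hx0.trans_le hxy).ne'
  have := strictConcaveOn_sin_Icc.concaveOn.slope_anti (x := 0) ⟨le_rfl, pi_pos.le⟩
    ⟨hx, hx0.ne'⟩ ⟨hy, hy0⟩ hxy
  simpa [slope_def_field, sinc_of_ne_zero hx0.ne', sinc_of_ne_zero hy0] using this

lemma sinc_nonneg_of_mem_Icc {x : ℝ} (hx : x ∈ Icc 0 π) : 0 ≤ Real.sinc x :=
  sinc_pi ▸ sinc_antitoneOn hx ⟨pi_pos.le, le_rfl⟩ hx.2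

lemma cos_add_sinc_mul_sq_le_of_nonneg {a x : ℝ} (ha : a ∈ Icc 0 π) (hx : 0 ≤ x) :
    cos a + Real.sinc a * a ^ 2 / 2 ≤ cos x + Real.sinc a * x ^ 2 / 2 := by
  set h : ℝ → ℝ := fun y => cos y + Real.sinc a * y ^ 2 / 2
  have hderiv : ∀ y, HasDerivAt h (Real.sinc a * y - sin y) y := fun y =>
    ((hasDerivAt_cos y).add
      (((hasDerivAt_pow 2 y).const_mul (Real.sinc a)).div_const 2)).congr_deriv (by ring)
  have hcont : Continuous h := by fun_prop
  have h_anti : AntitoneOn h (Icc 0 a) := by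
    refine antitoneOn_of_hasDerivWithinAt_nonpos (convex_Icc 0 a) hcont.continuousOn
      (fun y _ => (hderiv y).hasDerivWithinAt) fun y hy => ?_
    rw [interior_Icc] at hy
    have := mul_le_mul_of_nonneg_right
      (sinc_antitoneOn ⟨hy.1.le, hy.2.le.trans ha.2⟩ ha hy.2.le) hy.1.le
    rw [sinc_mul_self] at this
    linarith
  have h_mono : MonotoneOn h (Icc a π) := by
    refine monotoneOn_of_hasDerivWithinAt_nonneg (convex_Icc a π) hcont.continuousOn
      (fun y _ => (hderiv y).hasDerivWithinAt) fun y hy => ?_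
    rw [interior_Icc] at hy
    have := mul_le_mul_of_nonneg_right
      (sinc_antitoneOn ha ⟨ha.1.trans hy.1.le, hy.2.le⟩ hy.1.le) (ha.1.trans hy.1.le)
    rw [sinc_mul_self] at this
    linarith
  show h a ≤ h x
  rcases le_total x a with hxa | hax
  · exact h_anti ⟨hx, hxa⟩ ⟨ha.1, le_rfl⟩ hxa
  rcases le_total x π with hxπ | hπx
  · exact h_mono ⟨le_rfl, ha.2⟩ ⟨hax, hxπ⟩ hax
  calc h a ≤ h π := h_mono ⟨le_rfl, ha.2⟩ ⟨ha.2, le_rfl⟩ ha.2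
    _ ≤ h x := by
      have := sinc_nonneg_of_mem_Icc ha
      simp only [h, cos_pi]
      gcongr
      exact neg_one_le_cos x

lemma cos_add_sinc_mul_sq_le {a : ℝ} (ha : |a| ≤ π) (x : ℝ) :
    cos a + Real.sinc a * a ^ 2 / 2 ≤ cos x + Real.sinc a * x ^ 2 / 2 := by
  have := cos_add_sinc_mul_sq_le_of_nonneg ⟨abs_nonneg a, ha⟩ (abs_nonneg x)
  rwa [cos_abs, cos_abs, sinc_abs, sq_abs, sq_abs] at this

lemma two_mul_cos_sub_sinc_mul_sq_le {u ψ ψh θ θh : ℝ} (k : ℤ) (hu : 0 ≤ u)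
    (hψh : ψh = ψ + π + 2 * π * k) (hθh : |ψh - θh| ≤ π) :
    2 * (u * cos (ψ - θ)) - u * Real.sinc (ψh - θh) * (ψh - θ) ^ 2 ≤
      2 * (u * cos (ψ - θh)) - u * Real.sinc (ψh - θh) * (ψh - θh) ^ 2 := by
  have hcos : ∀ t, cos (ψ - t) = -cos (ψh - t) := fun t => by
    rw [hψh, show ψ + π + 2 * π * k - t = ψ - t + π + k * (2 * π) by ring,
      cos_add_int_mul_two_pi, cos_add_pi, neg_neg]
  have := mul_le_mul_of_nonneg_left (cos_add_sinc_mul_sq_le hθh (ψh - θ)) hu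
  rw [hcos, hcos]
  linarith

end Real

namespace Complex

lemma re_mul_exp_ofReal_mul_I (w : ℂ) (θ : ℝ) :
    (w * exp (θ * I)).re = ‖w‖ * Real.cos (arg w + θ) := by
  conv_lhs => rw [← norm_mul_exp_arg_mul_I w]
  rw [mul_assoc, ← exp_add, ← add_mul, ← ofReal_add, re_ofReal_mul, exp_ofReal_mul_I_re]

end Complex

lemma sum_sum_eq_sum_add_two_mul_sum_lt {ι R : Type*} [Fintype ι] [LinearOrder ι] [Semiring R]
    (f : ι → ι → R) (hf : ∀ i j, f i j = f j i) :
    ∑ i, ∑ j, f i j =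
      ∑ i, f i i + 2 * ∑ p ∈ Finset.univ.filter (fun p : ι × ι => p.1 < p.2), f p.1 p.2 := by
  have hsplit : ∀ i j, f i j = (if i < j then f i j else 0) + (if i = j then f i j else 0) +
      (if j < i then f i j else 0) := fun i j => by
    rcases lt_trichotomy i j with h | rfl | h
    · simp [h, h.ne, h.not_gt]
    · simp
    · simp [h, h.ne', h.not_gt]
  have hlt : ∑ p ∈ Finset.univ.filter (fun p : ι × ι => p.1 < p.2), f p.1 p.2 =
      ∑ i, ∑ j, if i < j then f i j else 0 := by
    rw [Finset.sum_filter, Fintype.sum_prod_type]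
  have hgt : ∑ i, ∑ j, (if j < i then f i j else 0) = ∑ i, ∑ j, if i < j then f i j else 0 := by
    rw [Finset.sum_comm]; simp only [hf]
  rw [Finset.sum_congr rfl fun i _ => Finset.sum_congr rfl fun j _ => hsplit i j]
  simp only [Finset.sum_add_distrib, Finset.sum_ite_eq, Finset.mem_univ, if_true, hgt, hlt]
  rw [two_mul]
  abel

lemma Matrix.IsHermitian.re_star_dotProduct_mulVec {𝕜 ι : Type*} [RCLike 𝕜] [Fintype ι]
    [LinearOrder ι] {A : Matrix ι ι 𝕜} (hA : A.IsHermitian) (v : ι → 𝕜) :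
    RCLike.re (star v ⬝ᵥ A *ᵥ v) = ∑ i, RCLike.re (A i i * (star (v i) * v i)) +
      2 * ∑ p ∈ Finset.univ.filter (fun p : ι × ι => p.1 < p.2),
        RCLike.re (A p.1 p.2 * (star (v p.1) * v p.2)) := by
  have hexpand : star v ⬝ᵥ A *ᵥ v = ∑ i, ∑ j, A i j * (star (v i) * v j) := by
    simp only [dotProduct, mulVec, Pi.star_apply, Finset.mul_sum]
    exact Finset.sum_congr rfl fun i _ => Finset.sum_congr rfl fun j _ => by ring
  simp only [hexpand, map_sum]
  refine sum_sum_eq_sum_add_two_mul_sum_lt _ fun i j => ?_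
  have hconj : A i j * (star (v i) * v j) = starRingEnd 𝕜 (A j i * (star (v j) * v i)) := by
    rw [← hA.apply i j]
    simp only [RCLike.star_def, map_mul, RCLike.conj_conj]
    ring
  rw [hconj, RCLike.conj_re]

section Steering

variable {M : ℕ} (d : Fin M → Fin 3 → ℝ) (ω : ℝ) (q : Fin 3 → ℝ)

lemma star_steer_mul_steer (m r : Fin M) :
    star (steer M d ω q m) * steer M d ω q r =
      ((M : ℝ)⁻¹ : ℝ) * Complex.exp (((-(ω * ((d m - d r) ⬝ᵥ q)) : ℝ) : ℂ) * Complex.I) := by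
  have hsqrt : ((√(M : ℝ) : ℂ))⁻¹ * ((√(M : ℝ) : ℂ))⁻¹ = (((M : ℝ)⁻¹ : ℝ) : ℂ) := by
    rw [← mul_inv, ← Complex.ofReal_mul, Real.mul_self_sqrt (Nat.cast_nonneg M),
      Complex.ofReal_inv]
  simp only [steer, star_mul', Complex.star_def, map_inv₀, Complex.conj_ofReal,
    ← Complex.exp_conj, map_mul, Complex.conj_I]
  rw [mul_mul_mul_comm, hsqrt, ← Complex.exp_add, sub_dotProduct]
  congr 2
  push_cast
  ring

lemma re_mul_star_steer_mul_steer (V : Matrix (Fin M) (Fin M) ℂ) (m r : Fin M) :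
    (V m r * (star (steer M d ω q m) * steer M d ω q r)).re =
      ‖V m r‖ / M * cos (Complex.arg (V m r) - ω * ((d m - d r) ⬝ᵥ q)) := by
  rw [star_steer_mul_steer, mul_left_comm, Complex.re_ofReal_mul,
    Complex.re_mul_exp_ofReal_mul_I, ← sub_eq_add_neg]
  ring

lemma re_star_steer_dotProduct_mulVec {V : Matrix (Fin M) (Fin M) ℂ} (hV : V.IsHermitian) :
    (star (steer M d ω q) ⬝ᵥ V *ᵥ steer M d ω q).re =
      ∑ m, ‖V m m‖ / M * cos (Complex.arg (V m m)) +
        2 * ∑ p ∈ pairs M,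
          ‖V p.1 p.2‖ / M * cos (Complex.arg (V p.1 p.2) - ω * ((d p.1 - d p.2) ⬝ᵥ q)) := by
  have := hV.re_star_dotProduct_mulVec (steer M d ω q)
  simp only [RCLike.re_to_complex, re_mul_star_steer_mul_steer, sub_self, zero_dotProduct,
    mul_zero, sub_zero] at this
  exact this

end Steering

theorem quadratic_majorization_of_quadratic_form_general (M : ℕ)
    (d : Fin M → Fin 3 → ℝ) (ω : ℝ)
    (V : Matrix (Fin M) (Fin M) ℂ) (hV : V.IsHermitian)
    (qhat : Fin 3 → ℝ)
    (z : Fin M × Fin M → ℤ)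
    (hz : ∀ p ∈ pairs M, ∀ z' : ℤ,
      |Complex.arg (V p.1 p.2) + π - ω * ((d p.1 - d p.2) ⬝ᵥ qhat) + 2 * π * (z p : ℝ)| ≤
      |Complex.arg (V p.1 p.2) + π - ω * ((d p.1 - d p.2) ⬝ᵥ qhat) + 2 * π * (z' : ℝ)|)
    (ψh uh : Fin M × Fin M → ℝ)
    (hψh : ∀ p, ψh p = Complex.arg (V p.1 p.2) + π + 2 * π * (z p : ℝ))
    (huh : ∀ p, uh p =
      (‖V p.1 p.2‖ / (M : ℝ)) * _root_.sinc (ψh p - ω * ((d p.1 - d p.2) ⬝ᵥ qhat))) :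
    ∃ c : ℝ,
      (∀ q : Fin 3 → ℝ,
        (star (steer M d ω q) ⬝ᵥ V.mulVec (steer M d ω q)).re ≤
          (∑ p ∈ pairs M, uh p * (ψh p - ω * ((d p.1 - d p.2) ⬝ᵥ q)) ^ 2) + c) ∧
      (star (steer M d ω qhat) ⬝ᵥ V.mulVec (steer M d ω qhat)).re =
          (∑ p ∈ pairs M, uh p * (ψh p - ω * ((d p.1 - d p.2) ⬝ᵥ qhat)) ^ 2) + c := by
  set F : (Fin 3 → ℝ) → ℝ := fun q => (star (steer M d ω q) ⬝ᵥ V.mulVec (steer M d ω q)).re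
  set G : (Fin 3 → ℝ) → ℝ := fun q =>
    ∑ p ∈ pairs M, uh p * (ψh p - ω * ((d p.1 - d p.2) ⬝ᵥ q)) ^ 2
  refine ⟨F qhat - G qhat, fun q => ?_, by ring⟩
  have hpair : ∀ p ∈ pairs M,
      2 * (‖V p.1 p.2‖ / M * cos (Complex.arg (V p.1 p.2) - ω * ((d p.1 - d p.2) ⬝ᵥ q))) -
          uh p * (ψh p - ω * ((d p.1 - d p.2) ⬝ᵥ q)) ^ 2 ≤
        2 * (‖V p.1 p.2‖ / M * cos (Complex.arg (V p.1 p.2) - ω * ((d p.1 - d p.2) ⬝ᵥ qhat))) -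
          uh p * (ψh p - ω * ((d p.1 - d p.2) ⬝ᵥ qhat)) ^ 2 := by
    intro p hp
    have hnear : |ψh p - ω * ((d p.1 - d p.2) ⬝ᵥ qhat)| ≤ π := by
      have hplus := hz p hp (z p + 1)
      have hminus := hz p hp (z p - 1)
      push_cast at hplus hminus
      refine abs_le_of_abs_le_abs_add_two_mul pi_pos ?_ ?_ <;> rw [hψh p]
      · convert hplus using 2 <;> ring
      · convert hminus using 2 <;> ring
    rw [huh p]
    exact two_mul_cos_sub_sinc_mul_sq_le (z p) (by positivity) (hψh p) hnear
  have hsum := Finset.sum_le_sum hpair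
  simp only [Finset.sum_sub_distrib, ← Finset.mul_sum] at hsum
  simp only [F, G, re_star_steer_dotProduct_mulVec d ω _ hV]
  linarith

/-- Quadratic majorization of the steered quadratic form `a(q)^H V a(q)`:
there is a constant `c` such that
`a(q)^H V a(q) ≤ Σ_p û_p (ψ̂_p − ω Δ_pᵀ q)² + c` for all `q`, with equality at `q = q̂`. -/
theorem quadratic_majorization_of_quadratic_form (M : ℕ) (hM : 2 ≤ M)
    (d : Fin M → Fin 3 → ℝ) (ω : ℝ) (hω : 0 < ω)
    (V : Matrix (Fin M) (Fin M) ℂ) (hV : V.IsHermitian)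
    (qhat : Fin 3 → ℝ)
    (z : Fin M × Fin M → ℤ)
    (hz : ∀ p ∈ pairs M, ∀ z' : ℤ,
      |Complex.arg (V p.1 p.2) + π - ω * ((d p.1 - d p.2) ⬝ᵥ qhat) + 2 * π * (z p : ℝ)| ≤
      |Complex.arg (V p.1 p.2) + π - ω * ((d p.1 - d p.2) ⬝ᵥ qhat) + 2 * π * (z' : ℝ)|)
    (ψh uh : Fin M × Fin M → ℝ)
    (hψh : ∀ p, ψh p = Complex.arg (V p.1 p.2) + π + 2 * π * (z p : ℝ))
    (huh : ∀ p, uh p =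
      (‖V p.1 p.2‖ / (M : ℝ)) * _root_.sinc (ψh p - ω * ((d p.1 - d p.2) ⬝ᵥ qhat))) :
    ∃ c : ℝ,
      (∀ q : Fin 3 → ℝ,
        (star (steer M d ω q) ⬝ᵥ V.mulVec (steer M d ω q)).re ≤
          (∑ p ∈ pairs M, uh p * (ψh p - ω * ((d p.1 - d p.2) ⬝ᵥ q)) ^ 2) + c) ∧
      (star (steer M d ω qhat) ⬝ᵥ V.mulVec (steer M d ω qhat)).re =
          (∑ p ∈ pairs M, uh p * (ψh p - ω * ((d p.1 - d p.2) ⬝ᵥ qhat)) ^ 2) + c :=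
  quadratic_majorization_of_quadratic_form_general M d ω V hV qhat z hz ψh uh hψh huh
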